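/- arXiv:1608.00790 — 2 statements merged into one kernel-verified Lean document; each statement's English description precedes it below -/
import Mathlib

section
/- Let $Q(z) = -e^{-i\psi}\frac{(e^{i\psi}+z)^2}{z^2(z-r)(z-1/r)}$ for $r>0$ and $\psi\in\mathbb{R}$. Then for every $\theta\in\mathbb{R}$ with $e^{i\theta}\neq r$, the value $Q(e^{i\theta})\cdot(ie^{i\theta})^2$ is a nonpositive real number; i.e., $Q(e^{i\theta})e^{2i\theta}\geq 0$ as a real number. -/
/-!
On the unit circle `conj z = z⁻¹`, so for `|w| = |z| = 1` one has `(w + z)² = w z |w + z|²` and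
`(z - r)(z - 1/r) = -(z / r) |z - r|²`. Substituting both, `Q(z) z²` collapses to
`r |w + z|² / |z - r|²` with `w = e^{iψ}`, which is nonnegative for `r > 0`.
-/

open Complex ComplexConjugate

namespace Complex

theorem conj_eq_inv_of_norm_eq_one {z : ℂ} (hz : ‖z‖ = 1) : conj z = z⁻¹ := by
  rw [inv_def, normSq_eq_norm_sq, hz]
  simp

theorem add_sq_eq_mul_normSq_add {w z : ℂ} (hw : ‖w‖ = 1) (hz : ‖z‖ = 1) :
    (w + z) ^ 2 = w * z * normSq (w + z) := by
  have hw0 : w ≠ 0 := ne_zero_of_norm_ne_zero (hw ▸ one_ne_zero)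
  have hz0 : z ≠ 0 := ne_zero_of_norm_ne_zero (hz ▸ one_ne_zero)
  rw [← mul_conj, map_add, conj_eq_inv_of_norm_eq_one hw, conj_eq_inv_of_norm_eq_one hz]
  field_simp
  ring

theorem sub_mul_sub_inv_eq_normSq_sub {z : ℂ} (hz : ‖z‖ = 1) {r : ℝ} (hr : r ≠ 0) :
    (z - r) * (z - 1 / r) = -(z / r) * normSq (z - r) := by
  have hz0 : z ≠ 0 := ne_zero_of_norm_ne_zero (hz ▸ one_ne_zero)
  have hr0 : (r : ℂ) ≠ 0 := ofReal_ne_zero.mpr hr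
  rw [← mul_conj, map_sub, conj_eq_inv_of_norm_eq_one hz, conj_ofReal]
  field_simp
  ring

end Complex

theorem growth_differential_mul_sq_eq {w z : ℂ} (hw : ‖w‖ = 1) (hz : ‖z‖ = 1) {r : ℝ}
    (hr : r ≠ 0) (hzr : z ≠ r) :
    -w⁻¹ * (w + z) ^ 2 / (z ^ 2 * (z - r) * (z - 1 / r)) * z ^ 2
      = ((r * normSq (w + z) / normSq (z - r) : ℝ) : ℂ) := by
  have hw0 : w ≠ 0 := ne_zero_of_norm_ne_zero (hw ▸ one_ne_zero)
  have hz0 : z ≠ 0 := ne_zero_of_norm_ne_zero (hz ▸ one_ne_zero)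
  have hzr0 : (normSq (z - r) : ℂ) ≠ 0 :=
    ofReal_ne_zero.mpr (normSq_pos.mpr (sub_ne_zero.mpr hzr)).ne'
  rw [mul_assoc (z ^ 2), sub_mul_sub_inv_eq_normSq_sub hz hr, add_sq_eq_mul_normSq_add hw hz]
  push_cast
  field_simp

theorem stmt0_general (r ψ θ : ℝ) (hr : 0 < r)
    (hθ : Complex.exp (θ * Complex.I) ≠ (r : ℂ)) :
    ∃ t : ℝ, 0 ≤ t ∧
      (-(Complex.exp (-(ψ : ℂ) * Complex.I)) *
          (Complex.exp ((ψ : ℂ) * Complex.I) + Complex.exp (θ * Complex.I)) ^ 2 /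
          ((Complex.exp (θ * Complex.I)) ^ 2 *
            (Complex.exp (θ * Complex.I) - (r : ℂ)) *
            (Complex.exp (θ * Complex.I) - 1 / (r : ℂ)))) *
        Complex.exp (2 * θ * Complex.I) = (t : ℂ) := by
  refine ⟨r * normSq (exp (ψ * I) + exp (θ * I)) / normSq (exp (θ * I) - r),
    div_nonneg (mul_nonneg hr.le (normSq_nonneg _)) (normSq_nonneg _), ?_⟩
  have hψ : exp (-(ψ : ℂ) * I) = (exp (ψ * I))⁻¹ := by rw [neg_mul, exp_neg]
  have h2θ : exp (2 * θ * I) = exp (θ * I) ^ 2 := by rw [← exp_nat_mul]; ring_nf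
  rw [hψ, h2θ]
  exact growth_differential_mul_sq_eq (norm_exp_ofReal_mul_I ψ) (norm_exp_ofReal_mul_I θ) hr.ne' hθ

/-- Admissibility of the growth quadratic differential on the unit circle:
`Q(e^{iθ}) e^{2iθ}` is a nonnegative real number. -/
theorem stmt0 (r ψ θ : ℝ) (hr : 0 < r) (hr1 : r ≠ 1)
    (hθ : Complex.exp (θ * Complex.I) ≠ (r : ℂ)) :
    ∃ t : ℝ, 0 ≤ t ∧
      (-(Complex.exp (-(ψ : ℂ) * Complex.I)) *
          (Complex.exp ((ψ : ℂ) * Complex.I) + Complex.exp (θ * Complex.I)) ^ 2 /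
          ((Complex.exp (θ * Complex.I)) ^ 2 *
            (Complex.exp (θ * Complex.I) - (r : ℂ)) *
            (Complex.exp (θ * Complex.I) - 1 / (r : ℂ)))) *
        Complex.exp (2 * θ * Complex.I) = (t : ℂ) :=
  stmt0_general r ψ θ hr hθ
end

section
/- Let $0<r<1$, $\beta = ie^{i\psi/2}$, and $x(\zeta) = \beta\operatorname{Log}\frac{\zeta+i\sqrt{r}}{\zeta-i\sqrt{r}} - \overline{\beta}\operatorname{Log}\frac{1-i\sqrt{r}\zeta}{1+i\sqrt{r}\zeta}$ with principal branch logarithms. Then $\operatorname{Re}(x(\zeta)) = 0$ for every $\zeta$ with $|\zeta|=1$. -/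
/-!
On the unit circle `conj ζ = ζ⁻¹`, so the second logarithm's argument is the conjugate of the
first one, `w = (ζ + i√r) / (ζ - i√r)`. Since `Re w > 0`, the principal logarithm commutes with
conjugation at `w`, and `x(ζ) = β log w - conj (β log w)` is purely imaginary.
-/

open Complex ComplexConjugate

lemma Complex.re_add_div_sub_pos {ζ c : ℂ} (hc : ‖c‖ < ‖ζ‖) : 0 < ((ζ + c) / (ζ - c)).re := by
  have hne : ζ - c ≠ 0 := fun h => by rw [sub_eq_zero.mp h] at hc; exact lt_irrefl _ hc
  have hre : ((ζ + c) / (ζ - c)).re = (normSq ζ - normSq c) / normSq (ζ - c) := by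
    simp only [div_re, normSq_apply, add_re, add_im, sub_re, sub_im]
    ring
  rw [hre, normSq_eq_norm_sq, normSq_eq_norm_sq]
  exact div_pos (by nlinarith [norm_nonneg c]) (normSq_pos.mpr hne)

lemma Complex.conj_add_div_sub {ζ : ℂ} (hζ : ‖ζ‖ = 1) (c : ℂ) :
    conj ((ζ + c) / (ζ - c)) = (1 + conj c * ζ) / (1 - conj c * ζ) := by
  have hζ0 : ζ ≠ 0 := norm_ne_zero_iff.mp (by rw [hζ]; exact one_ne_zero)
  rw [map_div₀, map_add, map_sub, ← inv_eq_conj hζ, ← mul_div_mul_right _ _ hζ0]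
  congr 1 <;> field_simp

lemma Complex.arg_ne_pi_of_re_pos {z : ℂ} (hz : 0 < z.re) : z.arg ≠ Real.pi :=
  fun h => (arg_eq_pi_iff.mp h).1.not_gt hz

lemma Complex.re_mul_sub_conj_mul_conj (β L : ℂ) : (β * L - conj β * conj L).re = 0 := by
  rw [← map_mul, sub_conj]
  simp

theorem stmt7_general (r ψ : ℝ) (hr1 : r < 1) (ζ : ℂ) (hζ : ‖ζ‖ = 1) :
    (Complex.I * Complex.exp ((ψ : ℂ) / 2 * Complex.I) *
        Complex.log ((ζ + Complex.I * (Real.sqrt r : ℂ)) / (ζ - Complex.I * (Real.sqrt r : ℂ)))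
      - (starRingEnd ℂ) (Complex.I * Complex.exp ((ψ : ℂ) / 2 * Complex.I)) *
        Complex.log ((1 - Complex.I * (Real.sqrt r : ℂ) * ζ) /
          (1 + Complex.I * (Real.sqrt r : ℂ) * ζ))).re = 0 := by
  set c : ℂ := I * (Real.sqrt r : ℂ)
  have hc : ‖c‖ < ‖ζ‖ := by
    rw [hζ, norm_mul, norm_I, one_mul, norm_real, Real.norm_of_nonneg (Real.sqrt_nonneg r)]
    exact (Real.sqrt_lt_sqrt_iff_of_pos one_pos).mpr hr1 |>.trans_eq Real.sqrt_one
  have hconj : (1 - c * ζ) / (1 + c * ζ) = conj ((ζ + c) / (ζ - c)) := by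
    rw [conj_add_div_sub hζ]
    simp [c, sub_eq_add_neg]
  rw [hconj, log_conj _ (arg_ne_pi_of_re_pos (re_add_div_sub_pos hc))]
  exact re_mul_sub_conj_mul_conj _ _

/-- The real part of the primitive `x` vanishes on the unit circle. -/
theorem stmt7 (r ψ : ℝ) (hr0 : 0 < r) (hr1 : r < 1) (ζ : ℂ) (hζ : ‖ζ‖ = 1) :
    (Complex.I * Complex.exp ((ψ : ℂ) / 2 * Complex.I) *
        Complex.log ((ζ + Complex.I * (Real.sqrt r : ℂ)) / (ζ - Complex.I * (Real.sqrt r : ℂ)))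
      - (starRingEnd ℂ) (Complex.I * Complex.exp ((ψ : ℂ) / 2 * Complex.I)) *
        Complex.log ((1 - Complex.I * (Real.sqrt r : ℂ) * ζ) /
          (1 + Complex.I * (Real.sqrt r : ℂ) * ζ))).re = 0 :=
  stmt7_general r ψ hr1 ζ hζ
end
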